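/- arXiv:1803.06518 — 2 statements merged into one kernel-verified Lean document; each statement's English description precedes it below -/
import Mathlib

section
/- (Proposition 4.1) The unique minimizer û of the CoCo objective, viewed as a map (x, γ, w) ↦ û(x, γ, w) from ℝ^n × [0,∞) × [0,∞)^{Σ_d C(n_d,2)} to ℝ^n, is jointly continuous in the data x, the tuning parameter γ, and the collection of nonnegative weights {w_{d,ij}}. -/
open scoped BigOperators
open Finset MeasureTheory

noncomputable section

/-- The full (vectorized) index set of a `D`-way tensor with mode sizes `n d`. -/
abbrev TIdx {D : ℕ} (n : Fin D → ℕ) : Type := ∀ d, Fin (n d)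

/-- The index set of a mode-`d` subarray: all modes except `d`. -/
abbrev RIdx {D : ℕ} (n : Fin D → ℕ) (d : Fin D) : Type :=
  ∀ d' : {x : Fin D // x ≠ d}, Fin (n d'.1)

/-- Insert the mode-`d` index `i` into the partial index `g`. -/
def insIdx {D : ℕ} (n : Fin D → ℕ) (d : Fin D) (g : RIdx n d) (i : Fin (n d)) : TIdx n :=
  fun d' => if h : d' = d then h.symm ▸ i else g ⟨d', h⟩

/-- The matrix `A_{d,ij} = I ⊗ ⋯ ⊗ (e_i - e_j)ᵀ ⊗ ⋯ ⊗ I`, realized on the canonical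
multi-index sets: applied to `u`, the `g`-th entry is `u(.., i, ..) - u(.., j, ..)`. -/
def Amat {D : ℕ} (n : Fin D → ℕ) (d : Fin D) (i j : Fin (n d)) :
    Matrix (RIdx n d) (TIdx n) ℝ :=
  Matrix.of fun g f =>
    (if f = insIdx n d g i then (1 : ℝ) else 0) - (if f = insIdx n d g j then (1 : ℝ) else 0)

/-- Euclidean (ℓ₂) norm of a finitely-indexed real vector. -/
def l2 {κ : Type*} [Fintype κ] (v : κ → ℝ) : ℝ := Real.sqrt (∑ a, v a ^ 2)

/-- The mode-`d` fusion penalty `R_d(u) = Σ_{i<j} w_{d,ij} ‖A_{d,ij} u‖₂`. -/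
def Rmode {D : ℕ} (n : Fin D → ℕ) (d : Fin D) (w : Fin (n d) → Fin (n d) → ℝ)
    (u : TIdx n → ℝ) : ℝ :=
  ∑ i, ∑ j, if i < j then w i j * l2 ((Amat n d i j).mulVec u) else 0

/-- The CoCo objective `F_γ(u) = (1/2)‖x - u‖₂² + γ Σ_d Σ_{i<j} w_{d,ij} ‖A_{d,ij} u‖₂`. -/
def coco {D : ℕ} (n : Fin D → ℕ) (x : TIdx n → ℝ) (γ : ℝ)
    (w : ∀ d, Fin (n d) → Fin (n d) → ℝ) (u : TIdx n → ℝ) : ℝ :=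
  (1 / 2) * ∑ f, (x f - u f) ^ 2 + γ * ∑ d, Rmode n d (w d) u

/-!
The CoCo objective is `1/2‖x - u‖²` plus a nonnegative combination of the convex functions
`u ↦ ‖A_{d,ij} u‖`, hence `1`-strongly convex in `u`, so every parameter `p` has quadratic growth
around its minimizer: `F_p u - F_p (û p) ≥ ‖u - û p‖² / 4`. Applying this at `p` and at a nearby
`q` and adding gives `‖û q - û p‖² / 2 ≤ (F_q - F_p)(û p) + (F_p - F_q)(û q)`. Comparing with
`u = 0` gives `‖û q‖ ≤ 2‖x_q‖`, so near `p` the minimizers stay in a compact ball, on which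
`F_q → F_p` uniformly by joint continuity of the objective.
-/

open Set Filter Topology Metric

section StrongConvexity

variable {E : Type*} [NormedAddCommGroup E] [InnerProductSpace ℝ E]

theorem StrongConvexOn.add_convexOn {s : Set E} {m : ℝ} {f g : E → ℝ}
    (hf : StrongConvexOn s m f) (hg : ConvexOn ℝ s g) : StrongConvexOn s m (f + g) := by
  have := hf.add (uniformConvexOn_zero.2 hg)
  rwa [add_zero] at this

theorem StrongConvexOn.mul_sq_norm_sub_le_of_isMinOn {s : Set E} {m : ℝ} {f : E → ℝ}
    (hf : StrongConvexOn s m f) {x y : E} (hx : x ∈ s) (hy : y ∈ s) (hmin : IsMinOn f s x) :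
    m / 4 * ‖y - x‖ ^ 2 ≤ f y - f x := by
  have hhalf : (0 : ℝ) ≤ 1 / 2 := by norm_num
  have hmid := hf.2 hx hy hhalf hhalf (by norm_num)
  have hle : f x ≤ _ := hmin (hf.1 hx hy hhalf hhalf (by norm_num))
  rw [norm_sub_rev] at hmid
  simp only [smul_eq_mul] at hmid
  linarith

theorem strongConvexOn_half_sq_norm_sub (x : E) :
    StrongConvexOn univ 1 fun u => 1 / 2 * ‖x - u‖ ^ 2 := by
  rw [strongConvexOn_iff_convex]
  have h : (fun u => 1 / 2 * ‖x - u‖ ^ 2 - 1 / 2 * ‖u‖ ^ 2) =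
      fun u => 1 / 2 * ‖x‖ ^ 2 - innerSL ℝ x u := by
    funext u
    rw [norm_sub_sq_real, innerSL_apply_apply]
    ring
  rw [h]
  exact (convexOn_const _ convex_univ).sub ((innerSL ℝ x).toLinearMap.concaveOn convex_univ)

end StrongConvexity

theorem convexOn_finset_sum {𝕜 E β ι : Type*} [Semiring 𝕜] [PartialOrder 𝕜] [AddCommMonoid E]
    [AddCommMonoid β] [PartialOrder β] [IsOrderedAddMonoid β] [SMul 𝕜 E] [DistribMulAction 𝕜 β]
    {s : Set E} {t : Finset ι} {f : ι → E → β} (hs : Convex 𝕜 s)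
    (hf : ∀ i ∈ t, ConvexOn 𝕜 s (f i)) : ConvexOn 𝕜 s fun x => ∑ i ∈ t, f i x :=
  ⟨hs, fun x hx y hy a b ha hb hab => by
    simp only [Finset.smul_sum, ← Finset.sum_add_distrib]
    exact Finset.sum_le_sum fun i hi => (hf i hi).2 hx hy ha hb hab⟩

theorem continuousOn_of_quadratic_growth {P E : Type*} [TopologicalSpace P] [PseudoMetricSpace E]
    {F : P → E → ℝ} {S : Set P} (hF : ContinuousOn ↿F (S ×ˢ univ)) {m : P → E} {κ : ℝ}
    (hκ : 0 < κ) (hgrowth : ∀ p ∈ S, ∀ u, κ * dist u (m p) ^ 2 ≤ F p u - F p (m p))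
    (hloc : ∀ p ∈ S, ∃ K, IsCompact K ∧ ∀ᶠ q in 𝓝[S] p, m q ∈ K) : ContinuousOn m S := by
  intro p hp
  obtain ⟨K, hK, hmK⟩ := hloc p hp
  refine Metric.tendsto_nhds.2 fun ε hε => ?_
  have hκε : 0 < κ * ε ^ 2 := by positivity
  obtain ⟨V, hV, hclose⟩ := (hK.insert (m p)).mem_uniformity_of_prod
    (hF.mono (prod_mono subset_rfl (subset_univ _))) hp (dist_mem_uniformity hκε)
  filter_upwards [self_mem_nhdsWithin, hmK, hV] with q hqS hqK hqV
  have hgrowth_q := hgrowth q hqS (m p)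
  have hgrowth_p := hgrowth p hp (m q)
  have hclose_p : dist (F q (m p)) (F p (m p)) < κ * ε ^ 2 := hclose q hqV (m p) (mem_insert _ _)
  have hclose_q : dist (F q (m q)) (F p (m q)) < κ * ε ^ 2 :=
    hclose q hqV (m q) (mem_insert_of_mem _ hqK)
  rw [Real.dist_eq, abs_lt] at hclose_p hclose_q
  rw [dist_comm] at hgrowth_q
  have : κ * dist (m q) (m p) ^ 2 < κ * ε ^ 2 := by linarith
  exact lt_of_pow_lt_pow_left₀ 2 hε.le (lt_of_mul_lt_mul_left this hκ.le)

theorem l2_eq_norm {κ : Type*} [Fintype κ] (v : κ → ℝ) : l2 v = ‖WithLp.toLp 2 v‖ := by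
  simp [l2, EuclideanSpace.norm_eq]

section Coco

variable {D : ℕ} (n : Fin D → ℕ)

theorem Rmode_eq_sum_norm (d : Fin D) (w : Fin (n d) → Fin (n d) → ℝ)
    (u : EuclideanSpace ℝ (TIdx n)) :
    Rmode n d w u =
      ∑ i, ∑ j with i < j, w i j * ‖(Amat n d i j).toEuclideanLin u‖ := by
  simp only [Rmode, l2_eq_norm, Finset.sum_filter]
  rfl

theorem coco_eq_norm (x : EuclideanSpace ℝ (TIdx n)) (γ : ℝ) (w : ∀ d, Fin (n d) → Fin (n d) → ℝ)
    (u : EuclideanSpace ℝ (TIdx n)) :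
    coco n x γ w u = 1 / 2 * ‖x - u‖ ^ 2 + γ * ∑ d, Rmode n d (w d) u := by
  simp [coco, EuclideanSpace.real_norm_sq_eq]

theorem Rmode_nonneg {d : Fin D} {w : Fin (n d) → Fin (n d) → ℝ} (hw : ∀ i j, i < j → 0 ≤ w i j)
    (u : TIdx n → ℝ) : 0 ≤ Rmode n d w u :=
  Finset.sum_nonneg fun i _ => Finset.sum_nonneg fun j _ => by
    split_ifs with h
    · exact mul_nonneg (hw i j h) (Real.sqrt_nonneg _)
    · exact le_rfl

theorem Rmode_zero (d : Fin D) (w : Fin (n d) → Fin (n d) → ℝ) : Rmode n d w 0 = 0 := by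
  simp [Rmode, l2]

theorem convexOn_Rmode {d : Fin D} {w : Fin (n d) → Fin (n d) → ℝ}
    (hw : ∀ i j, i < j → 0 ≤ w i j) :
    ConvexOn ℝ univ fun u : EuclideanSpace ℝ (TIdx n) => Rmode n d w u := by
  simp only [Rmode_eq_sum_norm]
  exact convexOn_finset_sum convex_univ fun i _ => convexOn_finset_sum convex_univ fun j hj =>
    ((convexOn_norm convex_univ).comp_linearMap _).smul (hw i j (Finset.mem_filter.1 hj).2)

theorem strongConvexOn_coco (x : EuclideanSpace ℝ (TIdx n)) {γ : ℝ}
    {w : ∀ d, Fin (n d) → Fin (n d) → ℝ} (hγ : 0 ≤ γ) (hw : ∀ d i j, i < j → 0 ≤ w d i j) :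
    StrongConvexOn univ 1 fun u : EuclideanSpace ℝ (TIdx n) => coco n x γ w u := by
  simp only [coco_eq_norm]
  exact (strongConvexOn_half_sq_norm_sub x).add_convexOn
    ((convexOn_finset_sum convex_univ fun d _ => convexOn_Rmode n (hw d)).smul hγ)

theorem continuous_coco :
    Continuous ↿fun (p : EuclideanSpace ℝ (TIdx n) × ℝ × (∀ d, Fin (n d) → Fin (n d) → ℝ))
      (u : EuclideanSpace ℝ (TIdx n)) => coco n p.1 p.2.1 p.2.2 u := by
  simp only [Function.HasUncurry.uncurry, coco_eq_norm, Rmode_eq_sum_norm]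
  fun_prop

theorem norm_le_two_mul_norm_of_coco_le_coco_zero {x u : EuclideanSpace ℝ (TIdx n)} {γ : ℝ}
    {w : ∀ d, Fin (n d) → Fin (n d) → ℝ} (hγ : 0 ≤ γ) (hw : ∀ d i j, i < j → 0 ≤ w d i j)
    (h : coco n x γ w u ≤ coco n x γ w (0 : EuclideanSpace ℝ (TIdx n))) : ‖u‖ ≤ 2 * ‖x‖ := by
  have hpen : 0 ≤ γ * ∑ d, Rmode n d (w d) u :=
    mul_nonneg hγ (Finset.sum_nonneg fun d _ => Rmode_nonneg n (hw d) u)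
  have hsq : ‖x - u‖ ^ 2 ≤ ‖x‖ ^ 2 := by
    rw [coco_eq_norm, coco_eq_norm] at h
    simp only [sub_zero, WithLp.ofLp_zero, Rmode_zero, Finset.sum_const_zero, mul_zero] at h
    linarith
  have hdist : ‖x - u‖ ≤ ‖x‖ :=
    (pow_le_pow_iff_left₀ (norm_nonneg _) (norm_nonneg _) two_ne_zero).1 hsq
  linarith [norm_le_norm_add_norm_sub x u]

end Coco

/-- **Proposition 4.1.** The unique minimizer of the CoCo objective, viewed as a
map `(x, γ, w) ↦ û(x, γ, w)`, is jointly continuous in the data `x`, the tuning parameter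
`γ ∈ [0,∞)`, and the collection of nonnegative weights `{w_{d,ij}}`. -/
theorem coco_minimizer_jointly_continuous
    {D : ℕ} (n : Fin D → ℕ)
    (uhat : EuclideanSpace ℝ (TIdx n) × ℝ × (∀ d, Fin (n d) → Fin (n d) → ℝ) →
      EuclideanSpace ℝ (TIdx n))
    (huhat : ∀ p ∈ {q : EuclideanSpace ℝ (TIdx n) × ℝ × (∀ d, Fin (n d) → Fin (n d) → ℝ) |
        0 ≤ q.2.1 ∧ ∀ d i j, i < j → 0 ≤ q.2.2 d i j},
      ∀ u : EuclideanSpace ℝ (TIdx n), coco n p.1 p.2.1 p.2.2 (uhat p) ≤ coco n p.1 p.2.1 p.2.2 u) :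
    ContinuousOn uhat
      {q : EuclideanSpace ℝ (TIdx n) × ℝ × (∀ d, Fin (n d) → Fin (n d) → ℝ) |
        0 ≤ q.2.1 ∧ ∀ d i j, i < j → 0 ≤ q.2.2 d i j} := by
  refine continuousOn_of_quadratic_growth (continuous_coco n).continuousOn
    (by norm_num : (0 : ℝ) < 1 / 4) (fun p hp u => ?_) (fun p hp => ?_)
  · have := (strongConvexOn_coco n p.1 hp.1 hp.2).mul_sq_norm_sub_le_of_isMinOn (mem_univ _)
      (mem_univ u) fun v _ => huhat p hp v
    simpa [dist_eq_norm] using this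
  · have hx : ∀ᶠ q in 𝓝 p, ‖q.1‖ < ‖p.1‖ + 1 :=
      (continuous_fst.norm.tendsto p).eventually (gt_mem_nhds (lt_add_one _))
    refine ⟨closedBall 0 (2 * (‖p.1‖ + 1)), isCompact_closedBall _ _, ?_⟩
    filter_upwards [self_mem_nhdsWithin, nhdsWithin_le_nhds hx] with q hq hxq
    rw [mem_closedBall_zero_iff]
    linarith [norm_le_two_mul_norm_of_coco_le_coco_zero n hq.1 hq.2 (huhat q hq 0)]
end
end

section
/- (Primal recovery from the dual and uniqueness) With the notation of the CoCo dual problem, if λ̂ ∈ C minimizes the constrained least-squares problem min_{λ ∈ C} (1/2)‖x − Aᵀλ‖₂², then û = x − Aᵀλ̂ is the unique global minimizer of the CoCo objective F_γ. Consequently, if λ̂₁ and λ̂₂ are any two solutions of the dual problem, then Aᵀλ̂₁ = Aᵀλ̂₂. -/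
open scoped BigOperators
open Finset MeasureTheory Matrix

noncomputable section

/-- The CoCo objective with penalties summed over given edge sets `E_d`:
`F_γ(u) = (1/2)‖x − u‖₂² + γ Σ_d Σ_{l ∈ E_d} w_{d,l} ‖A_{d,l} u‖₂`. -/
def cocoE {D : ℕ} (n : Fin D → ℕ) (E : ∀ d, Finset (Fin (n d) × Fin (n d)))
    (w : ∀ d, Fin (n d) × Fin (n d) → ℝ) (x : TIdx n → ℝ) (γ : ℝ) (u : TIdx n → ℝ) : ℝ :=
  (1 / 2) * ∑ f, (x f - u f) ^ 2 +
    γ * ∑ d, ∑ l ∈ E d, w d l * l2 ((Amat n d l.1 l.2).mulVec u)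

/-- A dual variable: one block `λ_{d,l} ∈ ℝ^{n_{-d}}` for each mode `d` and pair `l`. -/
abbrev DualVar {D : ℕ} (n : Fin D → ℕ) : Type :=
  ∀ d : Fin D, (Fin (n d) × Fin (n d)) → RIdx n d → ℝ

/-- `Aᵀλ = Σ_d Σ_{l ∈ E_d} A_{d,l}ᵀ λ_{d,l}`, the transpose of the stacked matrix applied to a
dual variable. -/
def ATlam {D : ℕ} (n : Fin D → ℕ) (E : ∀ d, Finset (Fin (n d) × Fin (n d)))
    (lam : DualVar n) : TIdx n → ℝ :=
  fun f => ∑ d, ∑ l ∈ E d, ∑ g, lam d l g * Amat n d l.1 l.2 g f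

/-- Membership in the dual feasible set `C`: `‖λ_{d,l}‖₂ ≤ γ w_{d,l}` for every mode `d` and
edge `l ∈ E_d`. -/
def InDualBall {D : ℕ} (n : Fin D → ℕ) (E : ∀ d, Finset (Fin (n d) × Fin (n d)))
    (w : ∀ d, Fin (n d) × Fin (n d) → ℝ) (γ : ℝ) (lam : DualVar n) : Prop :=
  ∀ d, ∀ l ∈ E d, l2 (lam d l) ≤ γ * w d l

/-- The Lagrangian dual objective `G(λ) = (1/2)‖x‖₂² − (1/2)‖x − Aᵀλ‖₂²`. -/
def dualObj {D : ℕ} (n : Fin D → ℕ) (E : ∀ d, Finset (Fin (n d) × Fin (n d)))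
    (x : TIdx n → ℝ) (lam : DualVar n) : ℝ :=
  (1 / 2) * ∑ f, x f ^ 2 - (1 / 2) * ∑ f, (x f - ATlam n E lam f) ^ 2

/-! ### Auxiliary lemmas -/

section AuxL2
variable {κ : Type*} [Fintype κ]

lemma l2_nonneg (v : κ → ℝ) : 0 ≤ l2 v := Real.sqrt_nonneg _

lemma l2_sq (v : κ → ℝ) : l2 v ^ 2 = ∑ a, v a ^ 2 :=
  Real.sq_sqrt (Finset.sum_nonneg fun _ _ => sq_nonneg _)

lemma inner_le_l2_l2 (u v : κ → ℝ) : ∑ a, u a * v a ≤ l2 u * l2 v :=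
  Real.sum_mul_le_sqrt_mul_sqrt _ _ _

lemma l2_smul (c : ℝ) (v : κ → ℝ) : l2 (fun a => c * v a) = |c| * l2 v := by
  unfold l2
  rw [← Real.sqrt_sq_eq_abs, ← Real.sqrt_mul (sq_nonneg c), Finset.mul_sum]
  congr 1; exact Finset.sum_congr rfl fun a _ => by ring

lemma l2_add_le (u v : κ → ℝ) : l2 (fun a => u a + v a) ≤ l2 u + l2 v := by
  have h2 : l2 (fun a => u a + v a) ^ 2 ≤ (l2 u + l2 v) ^ 2 := by
    rw [l2_sq]
    have : ∑ a, (u a + v a) ^ 2 = (∑ a, u a ^ 2) + 2 * (∑ a, u a * v a) + ∑ a, v a ^ 2 := by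
      rw [Finset.mul_sum, ← Finset.sum_add_distrib, ← Finset.sum_add_distrib]
      exact Finset.sum_congr rfl fun a _ => by ring
    rw [this, ← l2_sq u, ← l2_sq v]
    nlinarith [inner_le_l2_l2 u v]
  have h1 : (0:ℝ) ≤ l2 u + l2 v := by
    have := l2_nonneg u; have := l2_nonneg v; linarith
  nlinarith [l2_nonneg (fun a => u a + v a)]

lemma l2_eq_zero_iff (v : κ → ℝ) (h : l2 v = 0) : ∀ a, v a = 0 := by
  intro a
  have hs : ∑ b, v b ^ 2 = 0 := by rw [← l2_sq, h]; ring
  have := (Finset.sum_eq_zero_iff_of_nonneg (fun b _ => sq_nonneg (v b))).1 hs a (Finset.mem_univ a)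
  exact pow_eq_zero_iff two_ne_zero |>.1 this

/-- Per-block construction of the maximal dual block. -/
lemma block_att (b : κ → ℝ) (cw : ℝ) (hcw : 0 ≤ cw) :
    l2 (fun g => (cw / l2 b) * b g) ≤ cw ∧
      ∑ g, ((cw / l2 b) * b g) * b g = cw * l2 b := by
  rcases eq_or_ne (l2 b) 0 with h | h
  · have hb : ∀ g, b g = 0 := l2_eq_zero_iff b h
    constructor
    · have : (fun g => (cw / l2 b) * b g) = fun _ => (0:ℝ) := funext fun g => by rw [hb g]; ring
      rw [this]
      simpa [l2] using hcw
    · simp [hb, h]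
  · have hpos : 0 < l2 b := lt_of_le_of_ne (l2_nonneg b) (Ne.symm h)
    constructor
    · rw [l2_smul, abs_of_nonneg (div_nonneg hcw hpos.le), div_mul_cancel₀ _ h]
    · have heq : ∑ g, ((cw / l2 b) * b g) * b g = (cw / l2 b) * ∑ g, b g ^ 2 := by
        rw [Finset.mul_sum]; exact Finset.sum_congr rfl fun g _ => by ring
      rw [heq, ← l2_sq]
      field_simp

lemma quad_id (x v u : κ → ℝ) :
    (1/2) * ∑ f, (x f - u f) ^ 2 + ∑ f, v f * u f
      = (1/2) * ∑ f, (u f - (x f - v f)) ^ 2 + ∑ f, v f * (x f - v f)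
          + (1/2) * ∑ f, v f ^ 2 := by
  rw [Finset.mul_sum, Finset.mul_sum, Finset.mul_sum, ← Finset.sum_add_distrib,
    ← Finset.sum_add_distrib, ← Finset.sum_add_distrib]
  exact Finset.sum_congr rfl fun f _ => by ring

lemma quad_exp (a s : κ → ℝ) (t : ℝ) :
    ∑ f, (a f - t * s f) ^ 2
      = ∑ f, a f ^ 2 - 2 * t * (∑ f, a f * s f) + t ^ 2 * ∑ f, s f ^ 2 := by
  rw [Finset.mul_sum, Finset.mul_sum, ← Finset.sum_sub_distrib, ← Finset.sum_add_distrib]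
  exact Finset.sum_congr rfl fun f _ => by ring

end AuxL2

section AuxATlam
variable {D : ℕ} {n : Fin D → ℕ} {E : ∀ d, Finset (Fin (n d) × Fin (n d))}

/-- Adjointness: `⟨Aᵀλ, u⟩ = ⟨λ, A u⟩`. -/
lemma sum_ATlam_mul (lam : DualVar n) (u : TIdx n → ℝ) :
    ∑ f, ATlam n E lam f * u f
      = ∑ d, ∑ l ∈ E d, ∑ g, lam d l g * ((Amat n d l.1 l.2).mulVec u) g := by
  simp only [ATlam, Finset.sum_mul]
  rw [Finset.sum_comm]
  refine Finset.sum_congr rfl fun d _ => ?_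
  rw [Finset.sum_comm]
  refine Finset.sum_congr rfl fun l _ => ?_
  rw [Finset.sum_comm]
  refine Finset.sum_congr rfl fun g _ => ?_
  simp only [Matrix.mulVec, dotProduct, Finset.mul_sum]
  exact Finset.sum_congr rfl fun f _ => by ring

/-- `ATlam` of a convex combination. -/
lemma ATlam_comb (lam1 lam2 : DualVar n) (t : ℝ) (f : TIdx n) :
    ATlam n E (fun d l g => lam1 d l g + t * (lam2 d l g - lam1 d l g)) f
      = ATlam n E lam1 f + t * (ATlam n E lam2 f - ATlam n E lam1 f) := by
  simp only [ATlam]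
  calc ∑ d, ∑ l ∈ E d, ∑ g,
        (lam1 d l g + t * (lam2 d l g - lam1 d l g)) * Amat n d l.1 l.2 g f
      = ∑ d, ∑ l ∈ E d, ∑ g,
          (lam1 d l g * Amat n d l.1 l.2 g f + t * (lam2 d l g * Amat n d l.1 l.2 g f)
            - t * (lam1 d l g * Amat n d l.1 l.2 g f)) := by
        refine Finset.sum_congr rfl fun d _ => Finset.sum_congr rfl fun l _ =>
          Finset.sum_congr rfl fun g _ => by ring
    _ = _ := by
        simp only [Finset.sum_sub_distrib, Finset.sum_add_distrib, ← Finset.mul_sum]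
        ring

/-- The maximizing dual variable over the ball. -/
lemma exists_attain (w : ∀ d, Fin (n d) × Fin (n d) → ℝ)
    (hw : ∀ d, ∀ l ∈ E d, 0 < w d l) (γ : ℝ) (hγ : 0 ≤ γ) (z : TIdx n → ℝ) :
    ∃ lam : DualVar n, InDualBall n E w γ lam ∧
      (∑ d, ∑ l ∈ E d, ∑ g, lam d l g * ((Amat n d l.1 l.2).mulVec z) g)
        = γ * ∑ d, ∑ l ∈ E d, w d l * l2 ((Amat n d l.1 l.2).mulVec z) := by
  refine ⟨fun d l g =>
    (γ * w d l / l2 ((Amat n d l.1 l.2).mulVec z)) * ((Amat n d l.1 l.2).mulVec z) g, ?_, ?_⟩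
  · intro d l hl
    exact (block_att _ _ (mul_nonneg hγ (hw d l hl).le)).1
  · rw [Finset.mul_sum]
    refine Finset.sum_congr rfl fun d _ => ?_
    rw [Finset.mul_sum]
    refine Finset.sum_congr rfl fun l hl => ?_
    rw [(block_att ((Amat n d l.1 l.2).mulVec z) (γ * w d l)
      (mul_nonneg hγ (hw d l hl).le)).2]
    ring

end AuxATlam

/-- **primal recovery from the dual and uniqueness.** If `λ̂ ∈ C` minimizes the
constrained least-squares dual problem `min_{λ ∈ C} (1/2)‖x − Aᵀλ‖₂²`, then `û = x − Aᵀλ̂` is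
the unique global minimizer of the CoCo objective `F_γ`; consequently any two dual solutions
`λ̂₁, λ̂₂` satisfy `Aᵀλ̂₁ = Aᵀλ̂₂`. -/
theorem coco_primal_recovery_and_uniqueness
    {D : ℕ} (n : Fin D → ℕ) (E : ∀ d, Finset (Fin (n d) × Fin (n d)))
    (hE : ∀ d, ∀ l ∈ E d, l.1 < l.2)
    (w : ∀ d, Fin (n d) × Fin (n d) → ℝ) (hw : ∀ d, ∀ l ∈ E d, 0 < w d l)
    (x : TIdx n → ℝ) (γ : ℝ) (hγ : 0 ≤ γ) :
    (∀ lamhat : DualVar n, InDualBall n E w γ lamhat →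
      (∀ lam : DualVar n, InDualBall n E w γ lam →
        (1 / 2) * ∑ f, (x f - ATlam n E lamhat f) ^ 2 ≤
          (1 / 2) * ∑ f, (x f - ATlam n E lam f) ^ 2) →
      (∀ u : TIdx n → ℝ,
        cocoE n E w x γ (fun f => x f - ATlam n E lamhat f) ≤ cocoE n E w x γ u) ∧
      (∀ u : TIdx n → ℝ, (∀ v : TIdx n → ℝ, cocoE n E w x γ u ≤ cocoE n E w x γ v) →
        u = fun f => x f - ATlam n E lamhat f)) ∧
    (∀ lam1 lam2 : DualVar n,
      InDualBall n E w γ lam1 → InDualBall n E w γ lam2 →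
      (∀ lam : DualVar n, InDualBall n E w γ lam →
        (1 / 2) * ∑ f, (x f - ATlam n E lam1 f) ^ 2 ≤
          (1 / 2) * ∑ f, (x f - ATlam n E lam f) ^ 2) →
      (∀ lam : DualVar n, InDualBall n E w γ lam →
        (1 / 2) * ∑ f, (x f - ATlam n E lam2 f) ^ 2 ≤
          (1 / 2) * ∑ f, (x f - ATlam n E lam f) ^ 2) →
      ATlam n E lam1 = ATlam n E lam2) := by
  have main : ∀ lamhat : DualVar n, InDualBall n E w γ lamhat →
      (∀ lam : DualVar n, InDualBall n E w γ lam →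
        (1 / 2) * ∑ f, (x f - ATlam n E lamhat f) ^ 2 ≤
          (1 / 2) * ∑ f, (x f - ATlam n E lam f) ^ 2) →
      (∀ u : TIdx n → ℝ,
        cocoE n E w x γ (fun f => x f - ATlam n E lamhat f) ≤ cocoE n E w x γ u) ∧
      (∀ u : TIdx n → ℝ, (∀ v : TIdx n → ℝ, cocoE n E w x γ u ≤ cocoE n E w x γ v) →
        u = fun f => x f - ATlam n E lamhat f) := by
    intro lamhat hC hmin
    set uhat : TIdx n → ℝ := fun f => x f - ATlam n E lamhat f with huhat
    have hvar : ∀ lam : DualVar n, InDualBall n E w γ lam →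
        ∑ f, uhat f * (ATlam n E lam f - ATlam n E lamhat f) ≤ 0 := by
      intro lam hlam
      set s : TIdx n → ℝ := fun f => ATlam n E lam f - ATlam n E lamhat f with hs
      set c : ℝ := ∑ f, uhat f * s f with hc
      set Q : ℝ := ∑ f, s f ^ 2 with hQ
      have hQ0 : 0 ≤ Q := Finset.sum_nonneg fun _ _ => sq_nonneg _
      have key : ∀ t : ℝ, 0 ≤ t → t ≤ 1 → 0 ≤ - (t * c) + t ^ 2 / 2 * Q := by
        intro t ht0 ht1
        have hfeas : InDualBall n E w γ
            (fun d l g => lamhat d l g + t * (lam d l g - lamhat d l g)) := by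
          intro d l hl
          have heq : (fun g => lamhat d l g + t * (lam d l g - lamhat d l g))
              = fun g => (1 - t) * lamhat d l g + t * lam d l g :=
            funext fun g => by ring
          show l2 (fun g => lamhat d l g + t * (lam d l g - lamhat d l g)) ≤ γ * w d l
          rw [heq]
          have h1 := l2_add_le (fun g => (1 - t) * lamhat d l g) (fun g => t * lam d l g)
          rw [l2_smul, l2_smul, abs_of_nonneg (by linarith : (0:ℝ) ≤ 1 - t),
            abs_of_nonneg ht0] at h1
          have h2 := hC d l hl
          have h3 := hlam d l hl
          have h4 := l2_nonneg (lamhat d l)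
          have h5 := l2_nonneg (lam d l)
          nlinarith
        have hmle := hmin _ hfeas
        have hexp : ∑ f, (x f - ATlam n E
            (fun d l g => lamhat d l g + t * (lam d l g - lamhat d l g)) f) ^ 2
            = ∑ f, uhat f ^ 2 - 2 * t * c + t ^ 2 * Q := by
          have h1 : ∀ f, x f - ATlam n E
              (fun d l g => lamhat d l g + t * (lam d l g - lamhat d l g)) f
              = uhat f - t * s f := by
            intro f; rw [ATlam_comb]; simp only [huhat, hs]; ring
          rw [hc, hQ]
          calc ∑ f, (x f - ATlam n E
                (fun d l g => lamhat d l g + t * (lam d l g - lamhat d l g)) f) ^ 2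
              = ∑ f, (uhat f - t * s f) ^ 2 :=
                Finset.sum_congr rfl fun f _ => by rw [h1 f]
            _ = _ := quad_exp uhat s t
        have hxu : ∑ f, (x f - ATlam n E lamhat f) ^ 2 = ∑ f, uhat f ^ 2 :=
          Finset.sum_congr rfl fun f _ => by simp only [huhat]
        rw [hexp, hxu] at hmle
        linarith
      by_contra hpos
      push_neg at hpos
      rcases eq_or_lt_of_le hQ0 with hQe | hQl
      · have h := key 1 zero_le_one le_rfl
        rw [← hQe] at h
        nlinarith
      · have ht0 : 0 < min 1 (c / Q) := lt_min one_pos (div_pos hpos hQl)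
        have ht1 : min 1 (c / Q) ≤ 1 := min_le_left _ _
        have htq : min 1 (c / Q) * Q ≤ c := by
          have h := min_le_right 1 (c / Q)
          calc min 1 (c / Q) * Q ≤ (c / Q) * Q := by nlinarith
            _ = c := div_mul_cancel₀ _ (ne_of_gt hQl)
        have h := key _ ht0.le ht1
        nlinarith [mul_pos ht0 hpos, mul_le_mul_of_nonneg_left htq ht0.le]
    have hsup : γ * ∑ d, ∑ l ∈ E d, w d l * l2 ((Amat n d l.1 l.2).mulVec uhat)
        ≤ ∑ f, ATlam n E lamhat f * uhat f := by
      obtain ⟨lamstar, hfeas, heqs⟩ := exists_attain (E := E) w hw γ hγ uhat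
      have h1 := hvar lamstar hfeas
      have h2 : ∑ f, uhat f * (ATlam n E lamstar f - ATlam n E lamhat f)
          = ∑ f, ATlam n E lamstar f * uhat f - ∑ f, ATlam n E lamhat f * uhat f := by
        rw [← Finset.sum_sub_distrib]
        exact Finset.sum_congr rfl fun f _ => by ring
      rw [h2] at h1
      rw [← heqs, ← sum_ATlam_mul]
      linarith
    have hlow : ∀ u : TIdx n → ℝ,
        (1/2) * ∑ f, (u f - uhat f) ^ 2 + ∑ f, ATlam n E lamhat f * uhat f
          + (1/2) * ∑ f, (ATlam n E lamhat f) ^ 2 ≤ cocoE n E w x γ u := by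
      intro u
      have h1 : ∑ f, ATlam n E lamhat f * u f
          ≤ γ * ∑ d, ∑ l ∈ E d, w d l * l2 ((Amat n d l.1 l.2).mulVec u) := by
        rw [sum_ATlam_mul, Finset.mul_sum]
        refine Finset.sum_le_sum fun d _ => ?_
        rw [Finset.mul_sum]
        refine Finset.sum_le_sum fun l hl => ?_
        calc ∑ g, lamhat d l g * ((Amat n d l.1 l.2).mulVec u) g
            ≤ l2 (lamhat d l) * l2 ((Amat n d l.1 l.2).mulVec u) := inner_le_l2_l2 _ _
          _ ≤ (γ * w d l) * l2 ((Amat n d l.1 l.2).mulVec u) :=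
              mul_le_mul_of_nonneg_right (hC d l hl) (l2_nonneg _)
          _ = γ * (w d l * l2 ((Amat n d l.1 l.2).mulVec u)) := by ring
      have h2 := quad_id x (ATlam n E lamhat) u
      unfold cocoE
      simp only [huhat] at *
      linarith
    have hK : cocoE n E w x γ uhat ≤ ∑ f, ATlam n E lamhat f * uhat f
        + (1/2) * ∑ f, (ATlam n E lamhat f) ^ 2 := by
      unfold cocoE
      have hxuh : ∑ f, (x f - uhat f) ^ 2 = ∑ f, (ATlam n E lamhat f) ^ 2 :=
        Finset.sum_congr rfl fun f _ => by simp only [huhat]; ring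
      rw [hxuh]
      linarith [hsup]
    constructor
    · intro u
      have h1 := hlow u
      have h3 : 0 ≤ (1/2) * ∑ f, (u f - uhat f) ^ 2 := by positivity
      linarith [hK]
    · intro u hu
      have h1 := hlow u
      have h2 := hu uhat
      have h3 : ∑ f, (u f - uhat f) ^ 2 ≤ 0 := by linarith [hK]
      have h4 : ∑ f, (u f - uhat f) ^ 2 = 0 :=
        le_antisymm h3 (Finset.sum_nonneg fun _ _ => sq_nonneg _)
      funext f
      have h5 := (Finset.sum_eq_zero_iff_of_nonneg fun f _ => sq_nonneg _).1 h4 f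
        (Finset.mem_univ f)
      have h6 : u f - uhat f = 0 := pow_eq_zero_iff two_ne_zero |>.1 h5
      have h7 : u f = uhat f := sub_eq_zero.mp h6
      simp only [huhat] at h7
      exact h7
  refine ⟨main, ?_⟩
  intro lam1 lam2 h1C h2C hm1 hm2
  obtain ⟨min1, uniq1⟩ := main lam1 h1C hm1
  obtain ⟨min2, _⟩ := main lam2 h2C hm2
  have heq := uniq1 (fun f => x f - ATlam n E lam2 f) min2
  funext f
  have h := congrFun heq f
  linarith
end
end
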